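/- For every integer k ≥ 166: φ(1 − 2^{-k}) > 2^{k-1}·ln 2 − (ln 2)/2 − 1/2 − k^2·2^{-k}, where φ(α) = (ln 2 − h(α)) · (2^{k-1} + (2^{k-1} − 2)·k·(1−α) − 1/2) and h(α) = −α·ln α − (1−α)·ln(1−α). -/

import Mathlib

/-!
Write `ε = 2^(-k)` and `P = 2^(k-1)`, so that `ε P = 1/2`. Since `h` is symmetric and
`(1-ε) ln(1-ε) ≥ -ε`, we get `h(1 - ε) ≤ ε (1 + k ln 2)`, so `φ(1 - ε)` is at least
`(ln 2 - ε (1 + k ln 2)) (P + (P - 2) k ε - 1/2)`. Expanding with `ε P = 1/2`, this exceeds the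
claimed bound by `ε (k² (1 - ln 2 / 2) - k (3 ln 2 + 1) / 2 + 1/2) + ε² (2 k² ln 2 + 2 k)`,
which is positive once `k` is not tiny.
-/

open Real

/-- The entropy function `h(α) = -α ln α - (1-α) ln(1-α)` (note `Real.log 0 = 0`,
so the convention `0 · ln 0 = 0` holds automatically). -/
noncomputable def entH (α : ℝ) : ℝ :=
  -α * Real.log α - (1 - α) * Real.log (1 - α)

/-- `φ(α) = (ln 2 - h(α)) (2^(k-1) + (2^(k-1) - 2) k (1-α) - 1/2)`. -/
noncomputable def phiAM (k : ℕ) (α : ℝ) : ℝ :=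
  (Real.log 2 - entH α) * (2 ^ (k - 1) + ((2 : ℝ) ^ (k - 1) - 2) * k * (1 - α) - 1 / 2)

lemma entH_one_sub (α : ℝ) : entH (1 - α) = entH α := by
  simp only [entH, sub_sub_cancel]
  ring

lemma entH_le_sub_mul_log {α : ℝ} (hα : α ≤ 1) : entH α ≤ α - α * log α := by
  have h := self_sub_one_le_mul_log (sub_nonneg.2 hα)
  unfold entH
  linarith

lemma entH_two_zpow_neg_le (k : ℕ) :
    entH ((2 : ℝ) ^ (-(k : ℤ))) ≤ (2 : ℝ) ^ (-(k : ℤ)) * (1 + k * log 2) := by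
  have hle : (2 : ℝ) ^ (-(k : ℤ)) ≤ 1 := zpow_le_one_of_nonpos₀ one_le_two (by omega)
  have hlog : log ((2 : ℝ) ^ (-(k : ℤ))) = -(k * log 2) := by
    rw [log_zpow]
    push_cast
    ring
  calc entH ((2 : ℝ) ^ (-(k : ℤ)))
      ≤ 2 ^ (-(k : ℤ)) - 2 ^ (-(k : ℤ)) * log ((2 : ℝ) ^ (-(k : ℤ))) := entH_le_sub_mul_log hle
    _ = 2 ^ (-(k : ℤ)) * (1 + k * log 2) := by rw [hlog]; ring

lemma two_zpow_neg_mul_two_pow_pred {k : ℕ} (hk : 1 ≤ k) :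
    (2 : ℝ) ^ (-(k : ℤ)) * 2 ^ (k - 1) = 1 / 2 := by
  rw [← zpow_natCast, ← zpow_add₀ two_ne_zero, show -(k : ℤ) + ((k - 1 : ℕ) : ℤ) = -1 by omega]
  norm_num

lemma log_two_sub_mul_lower_bound {k ε P : ℝ} (hk : 166 ≤ k) (hε : 0 < ε) (hεP : ε * P = 1 / 2) :
    (log 2 - ε * (1 + k * log 2)) * (P + (P - 2) * k * ε - 1 / 2) >
      P * log 2 - log 2 / 2 - 1 / 2 - k ^ 2 * ε := by
  have hlog_lo : (0.6931 : ℝ) < log 2 := lt_trans (by norm_num) log_two_gt_d9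
  have hlog_hi : log 2 < 0.6932 := lt_of_lt_of_le log_two_lt_d9 (by norm_num)
  have expand : (log 2 - ε * (1 + k * log 2)) * (P + (P - 2) * k * ε - 1 / 2) -
      (P * log 2 - log 2 / 2 - 1 / 2 - k ^ 2 * ε)
      = ε * (k ^ 2 * (1 - log 2 / 2) - k * (3 * log 2 + 1) / 2 + 1 / 2)
        + ε ^ 2 * (2 * k ^ 2 * log 2 + 2 * k) := by
    linear_combination (-k ^ 2 * ε * log 2 - 1 - k * ε) * hεP
  have hlin : 0 < k ^ 2 * (1 - log 2 / 2) - k * (3 * log 2 + 1) / 2 + 1 / 2 := by nlinarith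
  have hquad : 0 ≤ ε ^ 2 * (2 * k ^ 2 * log 2 + 2 * k) := by
    have : 0 < log 2 := by linarith
    positivity
  nlinarith [mul_pos hε hlin]

/-- For every `k ≥ 166`:
`φ(1 - 2^(-k)) > 2^(k-1) ln 2 - (ln 2)/2 - 1/2 - k² 2^(-k)`. -/
theorem phiAM_at_one_sub_two_pow (k : ℕ) (hk : 166 ≤ k) :
    phiAM k (1 - (2 : ℝ) ^ (-(k : ℤ))) >
      2 ^ (k - 1) * Real.log 2 - Real.log 2 / 2 - 1 / 2
        - (k : ℝ) ^ 2 * (2 : ℝ) ^ (-(k : ℤ)) := by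
  set ε : ℝ := (2 : ℝ) ^ (-(k : ℤ))
  set P : ℝ := (2 : ℝ) ^ (k - 1)
  have hε : 0 < ε := by positivity
  have hP : 2 ≤ P := (pow_one (2 : ℝ)).ge.trans (pow_le_pow_right₀ one_le_two (by omega))
  have hM : 0 ≤ P + (P - 2) * k * ε - 1 / 2 := by
    have : 0 ≤ (P - 2) * k * ε := by have := sub_nonneg.2 hP; positivity
    linarith
  calc phiAM k (1 - ε) = (log 2 - entH ε) * (P + (P - 2) * k * ε - 1 / 2) := by
        rw [phiAM, entH_one_sub, sub_sub_cancel]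
    _ ≥ (log 2 - ε * (1 + k * log 2)) * (P + (P - 2) * k * ε - 1 / 2) :=
        mul_le_mul_of_nonneg_right (by linarith [entH_two_zpow_neg_le k]) hM
    _ > P * log 2 - log 2 / 2 - 1 / 2 - k ^ 2 * ε :=
        log_two_sub_mul_lower_bound (by exact_mod_cast hk) hε
          (two_zpow_neg_mul_two_pow_pred (by omega))
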